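/- Let n, m ≥ 3 and let M be the mn × mn (0,1)-matrix indexed by ZMod n × ZMod m whose ((i,j),(k,l))-entry is 1 exactly when the face vertex (k,l) of the Union Jack lattice UJL(n,m) is adjacent to the grid vertex (i,j), i.e. when (k,l) ∈ {(i,j), (i−1,j), (i,j−1), (i−1,j−1)}. Then for every x, det(x·I_{2mn} − Q(UJL(n,m))) = det( (x−4)(x−8)·I_{mn} − (x−4)·A(C_n □ C_m) − M·Mᵀ ), where A(C_n □ C_m) is the adjacency matrix of the Cartesian product of the cycles C_n and C_m (the n×m toroidal square lattice on ZMod n × ZMod m). -/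

import Mathlib

/-!
Listing grid vertices before face vertices, `x • 1 - Q(UJL(n,m))` is the block matrix
`[[(x - 8) • 1 - A, -M], [-Mᵀ, (x - 4) • 1]]`: grid vertices have degree 8, face vertices have
degree 4 and are pairwise non-adjacent, and `M` is the grid–face incidence. A scalar lower-right
block commutes with everything, so `det [[P, B], [C, c • 1]] = det (c • P - B * C)` for square
blocks of equal size and every scalar `c`, even the singular one `c = 0` (that is, `x = 4`).
-/

open scoped Classical
open Matrix

noncomputable section

/-- Vertex set of the Union Jack lattice `UJL(n,m)`: the first summand consists of the
"grid vertices" of the `n × m` toroidal square lattice, the second summand of the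
"face vertices" inserted in each face. -/
abbrev UJLVert (n m : ℕ) : Type := (ZMod n × ZMod m) ⊕ (ZMod n × ZMod m)

/-- Base adjacency relation of the Union Jack lattice (to be symmetrized):
grid vertex `(i,j)` is related to the grid vertices `(i+1,j)` and `(i,j+1)`
(symmetrization yields all four grid neighbours `(i±1,j)`, `(i,j±1)`), and the
grid vertex `(i,j)` is related to the face vertices `(i,j)`, `(i-1,j)`, `(i,j-1)`,
`(i-1,j-1)`, i.e. the face vertex `(k,l)` is adjacent to the grid vertices
`(k,l)`, `(k+1,l)`, `(k,l+1)`, `(k+1,l+1)`. -/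
def UJLRel (n m : ℕ) : UJLVert n m → UJLVert n m → Prop
  | Sum.inl p, Sum.inl q => (q.1 = p.1 + 1 ∧ q.2 = p.2) ∨ (q.1 = p.1 ∧ q.2 = p.2 + 1)
  | Sum.inl p, Sum.inr q =>
      (q.1 = p.1 ∧ q.2 = p.2) ∨ (q.1 = p.1 - 1 ∧ q.2 = p.2) ∨
        (q.1 = p.1 ∧ q.2 = p.2 - 1) ∨ (q.1 = p.1 - 1 ∧ q.2 = p.2 - 1)
  | _, _ => False

/-- The Union Jack lattice `UJL(n,m)` with toroidal boundary condition. -/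
def UJL (n m : ℕ) : SimpleGraph (UJLVert n m) := SimpleGraph.fromRel (UJLRel n m)

/-- `cos α_i` where `α_i = 2 π i / n`. -/
def cosα (n i : ℕ) : ℝ := Real.cos (2 * Real.pi * i / n)

/-- The signless Laplacian matrix `Q(UJL(n,m)) = D(UJL(n,m)) + A(UJL(n,m))`. -/
def signlessLaplacianUJL (n m : ℕ) [NeZero n] [NeZero m] :
    Matrix (UJLVert n m) (UJLVert n m) ℝ :=
  Matrix.diagonal (fun v => ((UJL n m).degree v : ℝ)) + (UJL n m).adjMatrix ℝ

/-- The cycle `C_n` on `ZMod n`: `i` is adjacent to `i + 1` and `i - 1`. -/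
def cycleGraph (n : ℕ) : SimpleGraph (ZMod n) := SimpleGraph.fromRel (fun i k => k = i + 1)

/-- The `mn × mn` (0,1)-matrix `M` recording the adjacency between the grid vertices and the
face vertices of `UJL(n,m)`: the `((i,j),(k,l))`-entry is `1` exactly when the face vertex
`(k,l)` is adjacent to the grid vertex `(i,j)`, i.e. `(k,l) ∈ {(i,j),(i−1,j),(i,j−1),(i−1,j−1)}`. -/
def Mmat (n m : ℕ) : Matrix (ZMod n × ZMod m) (ZMod n × ZMod m) ℝ :=
  Matrix.of fun p q =>
    if (q.1 = p.1 ∧ q.2 = p.2) ∨ (q.1 = p.1 - 1 ∧ q.2 = p.2) ∨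
        (q.1 = p.1 ∧ q.2 = p.2 - 1) ∨ (q.1 = p.1 - 1 ∧ q.2 = p.2 - 1) then (1 : ℝ) else 0

namespace Matrix

variable {m n R : Type*} [Fintype m] [Fintype n] [DecidableEq m] [DecidableEq n] [CommRing R]

theorem det_fromBlocks_smul_one₂₂_mul_pow (A : Matrix m m R) (B : Matrix m n R)
    (C : Matrix n m R) (c : R) :
    (fromBlocks A B C (c • 1)).det * c ^ Fintype.card m =
      (c • A - B * C).det * c ^ Fintype.card n := by
  have hmul : fromBlocks A B C (c • 1) * fromBlocks (c • 1) 0 (-C) 1 =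
      fromBlocks (c • A - B * C) B 0 (c • 1) := by
    simp only [fromBlocks_multiply, Matrix.mul_smul, Matrix.mul_one, Matrix.mul_zero,
      Matrix.mul_neg, Matrix.smul_mul, Matrix.one_mul, zero_add]
    congr 1 <;> abel
  have hdet := congrArg det hmul
  rwa [det_mul, det_fromBlocks_zero₁₂, det_fromBlocks_zero₂₁, det_smul, det_smul, det_one,
    det_one, mul_one, mul_one, mul_one] at hdet

theorem det_fromBlocks_smul_one₂₂ (A : Matrix m m R) (B : Matrix m n R) (C : Matrix n m R)
    (c : R) (h : Fintype.card m = Fintype.card n) :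
    (fromBlocks A B C (c • 1)).det = (c • A - B * C).det := by
  -- Cancel the power of the monic polynomial `X + c` over `R[X]`, then evaluate at `X = 0`.
  have key := det_fromBlocks_smul_one₂₂_mul_pow (A.map Polynomial.C) (B.map Polynomial.C)
    (C.map Polynomial.C) (Polynomial.X + Polynomial.C c)
  rw [h] at key
  have hreg := ((Polynomial.monic_X_add_C c).pow (Fintype.card n)).isRegular
  have heval := congrArg (Polynomial.evalRingHom 0) (hreg.right key)
  rw [RingHom.map_det, RingHom.map_det] at heval
  convert heval using 2
  · ext (i | i) (j | j) <;> simp [Matrix.one_apply, apply_ite]; grind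
  · ext i j
    simp [Matrix.mul_apply, Polynomial.eval_finsetSum]

end Matrix

section DifferenceSums

variable {G R : Type*} [AddCommGroup G] [Fintype G] [DecidableEq G] [AddCommMonoidWithOne R]

theorem sum_ite_sub_mem_eq_card_left (s : Finset G) (p : G) :
    ∑ q, (if p - q ∈ s then (1 : R) else 0) = s.card :=
  ((Equiv.subLeft p).sum_comp (fun d => if d ∈ s then (1 : R) else 0)).trans (by simp)

theorem sum_ite_sub_mem_eq_card_right (s : Finset G) (q : G) :
    ∑ p, (if p - q ∈ s then (1 : R) else 0) = s.card :=
  ((Equiv.subRight q).sum_comp (fun d => if d ∈ s then (1 : R) else 0)).trans (by simp)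

end DifferenceSums

theorem ZMod.two_ne_zero_of_three_le {n : ℕ} (hn : 3 ≤ n) : (2 : ZMod n) ≠ 0 := by
  intro h
  have hdvd := (ZMod.natCast_eq_zero_iff 2 n).mp (by exact_mod_cast h)
  have := Nat.le_of_dvd two_pos hdvd
  omega

theorem one_ne_zero_of_two_ne_zero {R : Type*} [AddMonoidWithOne R] (h : (2 : R) ≠ 0) :
    (1 : R) ≠ 0 :=
  fun h1 => h (by rw [← one_add_one_eq_two, h1, add_zero])

theorem SimpleGraph.sum_adjMatrix_apply {V R : Type*} [Fintype V] (G : SimpleGraph V)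
    [DecidableRel G.Adj] [NonAssocSemiring R] (v : V) :
    ∑ w, G.adjMatrix R v w = G.degree v := by
  simpa [mulVec, dotProduct] using G.adjMatrix_mulVec_const_apply (a := (1 : R)) (v := v)

section UnionJack

variable {n m : ℕ}

theorem cycleGraph_adj (h1 : (1 : ZMod n) ≠ 0) (i k : ZMod n) :
    (cycleGraph n).Adj i k ↔ k = i + 1 ∨ i = k + 1 := by
  simp only [cycleGraph, SimpleGraph.fromRel_adj, ne_eq, and_iff_right_iff_imp]
  rintro (rfl | rfl) <;> simpa using h1

theorem cycleGraph_degree [NeZero n] (h2 : (2 : ZMod n) ≠ 0) (i : ZMod n) :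
    (cycleGraph n).degree i = 2 := by
  have h1 := one_ne_zero_of_two_ne_zero h2
  have hnbr : (cycleGraph n).neighborFinset i = {i + 1, i - 1} := by
    ext k
    simp only [SimpleGraph.mem_neighborFinset, cycleGraph_adj h1, Finset.mem_insert,
      Finset.mem_singleton, eq_sub_iff_add_eq, eq_comm (a := i)]
  rw [← SimpleGraph.card_neighborFinset_eq_degree, hnbr, Finset.card_pair]
  intro h
  exact h2 (by linear_combination h)

theorem UJL_adj_inl_inl (h1n : (1 : ZMod n) ≠ 0) (h1m : (1 : ZMod m) ≠ 0)
    (p q : ZMod n × ZMod m) :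
    (UJL n m).Adj (Sum.inl p) (Sum.inl q) ↔
      ((cycleGraph n).boxProd (cycleGraph m)).Adj p q := by
  simp only [UJL, SimpleGraph.fromRel_adj, UJLRel, SimpleGraph.boxProd_adj, cycleGraph_adj h1n,
    cycleGraph_adj h1m]
  grind

theorem Mmat_apply (p q : ZMod n × ZMod m) :
    Mmat n m p q = if p - q ∈ ({0, 1} ×ˢ {0, 1} : Finset (ZMod n × ZMod m)) then 1 else 0 := by
  simp only [Mmat, of_apply, Finset.mem_product, Finset.mem_insert, Finset.mem_singleton,
    Prod.fst_sub, Prod.snd_sub, sub_eq_iff_eq_add, eq_sub_iff_add_eq]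
  grind

theorem UJL_adjMatrix_eq_fromBlocks (h1n : (1 : ZMod n) ≠ 0) (h1m : (1 : ZMod m) ≠ 0) :
    (UJL n m).adjMatrix ℝ =
      fromBlocks (((cycleGraph n).boxProd (cycleGraph m)).adjMatrix ℝ) (Mmat n m)
        (Mmat n m)ᵀ 0 := by
  ext (p | p) (q | q)
  · simp [UJL_adj_inl_inl h1n h1m]
  all_goals rw [SimpleGraph.adjMatrix_apply]; simp [UJL, SimpleGraph.fromRel_adj, UJLRel, Mmat]

theorem UJL_degree_inl [NeZero n] [NeZero m] (h2n : (2 : ZMod n) ≠ 0) (h2m : (2 : ZMod m) ≠ 0)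
    (p : ZMod n × ZMod m) : (UJL n m).degree (Sum.inl p) = 8 := by
  have h1n := one_ne_zero_of_two_ne_zero h2n
  have h1m := one_ne_zero_of_two_ne_zero h2m
  rw [← Nat.cast_inj (R := ℝ), ← SimpleGraph.sum_adjMatrix_apply,
    UJL_adjMatrix_eq_fromBlocks h1n h1m, Fintype.sum_sum_type]
  simp only [fromBlocks_apply₁₁, fromBlocks_apply₁₂, SimpleGraph.sum_adjMatrix_apply,
    SimpleGraph.degree_boxProd, cycleGraph_degree h2n, cycleGraph_degree h2m, Mmat_apply,
    sum_ite_sub_mem_eq_card_left, Finset.card_product, Finset.card_pair h1n.symm,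
    Finset.card_pair h1m.symm]
  norm_num

theorem UJL_degree_inr [NeZero n] [NeZero m] (h1n : (1 : ZMod n) ≠ 0) (h1m : (1 : ZMod m) ≠ 0)
    (q : ZMod n × ZMod m) : (UJL n m).degree (Sum.inr q) = 4 := by
  rw [← Nat.cast_inj (R := ℝ), ← SimpleGraph.sum_adjMatrix_apply,
    UJL_adjMatrix_eq_fromBlocks h1n h1m, Fintype.sum_sum_type]
  simp only [fromBlocks_apply₂₁, fromBlocks_apply₂₂, transpose_apply, Mmat_apply,
    sum_ite_sub_mem_eq_card_right, Finset.card_product, Finset.card_pair h1n.symm,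
    Finset.card_pair h1m.symm, Matrix.zero_apply, Finset.sum_const_zero]
  norm_num

theorem signlessLaplacianUJL_eq_fromBlocks [NeZero n] [NeZero m] (h2n : (2 : ZMod n) ≠ 0)
    (h2m : (2 : ZMod m) ≠ 0) :
    signlessLaplacianUJL n m =
      fromBlocks ((8 : ℝ) • 1 + ((cycleGraph n).boxProd (cycleGraph m)).adjMatrix ℝ)
        (Mmat n m) (Mmat n m)ᵀ ((4 : ℝ) • 1) := by
  have h1n := one_ne_zero_of_two_ne_zero h2n
  have h1m := one_ne_zero_of_two_ne_zero h2m
  have hdeg : (fun v => ((UJL n m).degree v : ℝ)) = Sum.elim (fun _ => 8) (fun _ => 4) := by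
    ext (p | p)
    · simp [UJL_degree_inl h2n h2m]
    · simp [UJL_degree_inr h1n h1m]
  rw [signlessLaplacianUJL, hdeg, ← fromBlocks_diagonal, UJL_adjMatrix_eq_fromBlocks h1n h1m,
    fromBlocks_add, smul_one_eq_diagonal, smul_one_eq_diagonal, zero_add, add_zero, zero_add]

end UnionJack

/-- For `n, m ≥ 3` and every `x`,
`det(x·I_{2mn} − Q(UJL(n,m))) = det((x−4)(x−8)·I_{mn} − (x−4)·A(C_n □ C_m) − M·Mᵀ)`,
where `A(C_n □ C_m)` is the adjacency matrix of the Cartesian (box) product of the cycles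
`C_n` and `C_m`, i.e. of the `n × m` toroidal square lattice. -/
theorem signlessLaplacian_det_reduction_UJL (n m : ℕ) (hn : 3 ≤ n) (hm : 3 ≤ m) :
    haveI : NeZero n := ⟨by omega⟩
    haveI : NeZero m := ⟨by omega⟩
    ∀ x : ℝ,
      (x • (1 : Matrix (UJLVert n m) (UJLVert n m) ℝ) - signlessLaplacianUJL n m).det =
        (((x - 4) * (x - 8)) • (1 : Matrix (ZMod n × ZMod m) (ZMod n × ZMod m) ℝ) -
            (x - 4) • ((cycleGraph n).boxProd (cycleGraph m)).adjMatrix ℝ -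
            Mmat n m * (Mmat n m)ᵀ).det := by
  have : NeZero n := ⟨by omega⟩
  have : NeZero m := ⟨by omega⟩
  intro x
  have hblock : x • 1 - signlessLaplacianUJL n m =
      fromBlocks ((x - 8) • 1 - ((cycleGraph n).boxProd (cycleGraph m)).adjMatrix ℝ) (-Mmat n m)
        (-(Mmat n m)ᵀ) ((x - 4) • 1) := by
    rw [signlessLaplacianUJL_eq_fromBlocks (ZMod.two_ne_zero_of_three_le hn)
        (ZMod.two_ne_zero_of_three_le hm), ← fromBlocks_one, fromBlocks_smul, sub_eq_add_neg,
      fromBlocks_neg, fromBlocks_add]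
    congr 1 <;> module
  rw [hblock, det_fromBlocks_smul_one₂₂ _ _ _ _ rfl, neg_mul_neg]
  congr 1
  module
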